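/- (Lower bound for the Klein–Gordon phase.) Let d ≥ 1. There is a constant c > 0, depending only on d, such that for all μ, ν ∈ {+1, −1} and all ξ, η ∈ ℝ^d: |Φ_{μν}(ξ−η, η)| ≥ c (1 + min{|ξ|, |η|, |ξ−η|})^{−1}. In particular Φ_{μν} never vanishes. -/
import Mathlib

open MeasureTheory Complex
open scoped ENNReal FourierTransform

noncomputable section

/-- Euclidean space ℝ^d. -/
abbrev Ed (d : ℕ) := EuclideanSpace ℝ (Fin d)

/-- Japanese bracket ⟨ξ⟩ = (1+|ξ|²)^{1/2}. -/
def jap {d : ℕ} (ξ : Ed d) : ℝ := Real.sqrt (1 + ‖ξ‖ ^ 2)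

/-- The Klein–Gordon resonance phase Φ_{μν}(ξ₁,ξ₂) = −⟨ξ₁+ξ₂⟩ + μ⟨ξ₁⟩ + ν⟨ξ₂⟩. -/
def phase {d : ℕ} (μ ν : ℝ) (ξ₁ ξ₂ : Ed d) : ℝ :=
  -jap (ξ₁ + ξ₂) + μ * jap ξ₁ + ν * jap ξ₂

lemma jap_sq {d : ℕ} (x : Ed d) : jap x ^ 2 = 1 + ‖x‖ ^ 2 :=
  Real.sq_sqrt (by positivity)

lemma one_le_jap {d : ℕ} (x : Ed d) : 1 ≤ jap x := by
  have h : Real.sqrt 1 ≤ Real.sqrt (1 + ‖x‖ ^ 2) :=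
    Real.sqrt_le_sqrt (by nlinarith [sq_nonneg ‖x‖])
  rw [Real.sqrt_one] at h
  exact h

lemma norm_le_jap {d : ℕ} (x : Ed d) : ‖x‖ ≤ jap x := by
  have h := Real.sqrt_le_sqrt (show ‖x‖ ^ 2 ≤ 1 + ‖x‖ ^ 2 by linarith)
  rwa [Real.sqrt_sq (norm_nonneg x)] at h

lemma jap_le {d : ℕ} (x : Ed d) : jap x ≤ 1 + ‖x‖ := by
  have h : (1:ℝ) + ‖x‖ ^ 2 ≤ (1 + ‖x‖) ^ 2 := by nlinarith [norm_nonneg x]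
  have h2 := Real.sqrt_le_sqrt h
  rwa [Real.sqrt_sq (by positivity : (0:ℝ) ≤ 1 + ‖x‖)] at h2

lemma jap_neg {d : ℕ} (x : Ed d) : jap (-x) = jap x := by simp [jap]

lemma jap_add_le {d : ℕ} (u v : Ed d) : jap (u + v) ≤ jap v + ‖u‖ := by
  have htri : ‖u + v‖ ≤ ‖u‖ + ‖v‖ := norm_add_le u v
  have hB := norm_le_jap v
  have hB1 := one_le_jap v
  have hBsq := jap_sq v
  have h : 1 + ‖u + v‖ ^ 2 ≤ (jap v + ‖u‖) ^ 2 := by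
    nlinarith [norm_nonneg u, norm_nonneg v, norm_nonneg (u+v)]
  have h2 := Real.sqrt_le_sqrt h
  rwa [Real.sqrt_sq (by positivity : (0:ℝ) ≤ jap v + ‖u‖)] at h2

lemma jap_sub_norm {d : ℕ} (x : Ed d) :
    (1/2 : ℝ) * (1 + ‖x‖)⁻¹ ≤ jap x - ‖x‖ := by
  have hx0 : 0 ≤ ‖x‖ := norm_nonneg x
  have h1 := one_le_jap x
  have hkey : (jap x - ‖x‖) * (jap x + ‖x‖) = 1 := by nlinarith [jap_sq x]
  have hpos : 0 < jap x + ‖x‖ := by linarith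
  have heq : jap x - ‖x‖ = 1 / (jap x + ‖x‖) := by
    rw [eq_div_iff (ne_of_gt hpos)]; exact hkey
  have hle : jap x + ‖x‖ ≤ 2 * (1 + ‖x‖) := by
    have := jap_le x; linarith
  have h2 : 1 / (2 * (1 + ‖x‖)) ≤ 1 / (jap x + ‖x‖) :=
    one_div_le_one_div_of_le hpos hle
  have h3 : (1/2 : ℝ) * (1 + ‖x‖)⁻¹ = 1 / (2 * (1 + ‖x‖)) := by
    field_simp
  rw [h3, heq]; exact h2

set_option maxHeartbeats 1000000 in
/-- key quantitative lemma -/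
lemma key {d : ℕ} (u v : Ed d) :
    (1/2 : ℝ) * (1 + min ‖u‖ (min ‖v‖ ‖u + v‖))⁻¹ ≤ jap u + jap v - jap (u + v) := by
  have ha0 : 0 ≤ ‖u‖ := norm_nonneg u
  have hb0 : 0 ≤ ‖v‖ := norm_nonneg v
  have hw0 : 0 ≤ ‖u + v‖ := norm_nonneg (u + v)
  have hWle1 : jap (u+v) ≤ jap v + ‖u‖ := jap_add_le u v
  have hWle2 : jap (u+v) ≤ jap u + ‖v‖ := by
    have := jap_add_le v u; rwa [add_comm v u] at this
  rcases le_total ‖u‖ (min ‖v‖ ‖u + v‖) with h1 | h1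
  · rw [min_eq_left h1]
    have := jap_sub_norm u
    linarith
  · rw [min_eq_right h1]
    rcases le_total ‖v‖ ‖u + v‖ with h2 | h2
    · rw [min_eq_left h2]
      have := jap_sub_norm v
      linarith
    · rw [min_eq_right h2]
      have hA := jap_sq u; have hB := jap_sq v; have hW := jap_sq (u + v)
      have hA1 := one_le_jap u; have hB1 := one_le_jap v; have hW1 := one_le_jap (u+v)
      have hAa := norm_le_jap u; have hBb := norm_le_jap v; have hWw := norm_le_jap (u+v)
      have htri : ‖u + v‖ ≤ ‖u‖ + ‖v‖ := norm_add_le u v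
      have hWle := jap_le (u+v)
      have hpos : (0:ℝ) < 1 + ‖u + v‖ := by linarith
      have hApos : (0:ℝ) < jap u := by linarith
      have hBpos : (0:ℝ) < jap v := by linarith
      have hABsq : (jap u * jap v) ^ 2 = (1 + ‖u‖ ^ 2) * (1 + ‖v‖ ^ 2) := by
        rw [mul_pow, hA, hB]
      have hprod : 1 + ‖u‖ * ‖v‖ ≤ jap u * jap v := by
        nlinarith [sq_nonneg (‖u‖ - ‖v‖), mul_pos hApos hBpos,
          mul_nonneg ha0 hb0, sq_nonneg (jap u * jap v - (1 + ‖u‖ * ‖v‖))]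
      rcases le_total (jap u + jap v) (2 * jap (u + v)) with h3 | h3
      · have hsum3 : 3 ≤ (jap u + jap v) ^ 2 - jap (u + v) ^ 2 := by nlinarith
        have hd0 : 0 ≤ jap u + jap v - jap (u + v) := by linarith
        have hmul : 3 ≤ (jap u + jap v - jap (u + v)) * (jap u + jap v + jap (u + v)) := by
          nlinarith
        have hb3 : jap u + jap v + jap (u + v) ≤ 3 * (1 + ‖u + v‖) := by linarith
        have hch : (jap u + jap v - jap (u + v)) * (jap u + jap v + jap (u + v)) ≤
            (jap u + jap v - jap (u + v)) * (3 * (1 + ‖u + v‖)) :=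
          mul_le_mul_of_nonneg_left hb3 hd0
        rw [show (1/2 : ℝ) * (1 + ‖u + v‖)⁻¹ = 1 / (2 * (1 + ‖u + v‖)) by field_simp]
        rw [div_le_iff₀ (by positivity)]
        linarith
      · have hF : 1 ≤ jap u + jap v - jap (u + v) := by linarith
        have hinv : (1 + ‖u + v‖)⁻¹ ≤ 1 := by
          rw [inv_le_one_iff₀]; right; linarith
        linarith

lemma min3_swap (a b c : ℝ) : min a (min b c) = min c (min b a) := by
  rw [min_comm b c, ← min_assoc, min_comm a c, min_assoc, min_comm b a]

lemma min3_nonneg {d : ℕ} (x y z : Ed d) : (0:ℝ) ≤ min ‖x‖ (min ‖y‖ ‖z‖) :=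
  le_min (norm_nonneg _) (le_min (norm_nonneg _) (norm_nonneg _))

/-- Lemma 3.3, estimate (3.18), first part: the lower bound
|Φ_{μν}(ξ−η,η)| ≥ c (1 + min{|ξ|,|η|,|ξ−η|})^{−1}; in particular Φ_{μν} never vanishes. -/
theorem phase_lower_bound (d : ℕ) (hd : 1 ≤ d) :
    ∃ c > (0 : ℝ), ∀ μ ν : ℝ, (μ = 1 ∨ μ = -1) → (ν = 1 ∨ ν = -1) →
      (∀ ξ η : Ed d,
        c * (1 + min ‖ξ‖ (min ‖η‖ ‖ξ - η‖))⁻¹ ≤ |phase μ ν (ξ - η) η|) ∧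
      ∀ ξ₁ ξ₂ : Ed d, phase μ ν ξ₁ ξ₂ ≠ 0 := by
  refine ⟨1/2, by norm_num, ?_⟩
  intro μ ν hμ hν
  have H : ∀ ξ η : Ed d,
      (1/2 : ℝ) * (1 + min ‖ξ‖ (min ‖η‖ ‖ξ - η‖))⁻¹ ≤ |phase μ ν (ξ - η) η| := by
    intro ξ η
    have hsum : (ξ - η) + η = ξ := sub_add_cancel ξ η
    rcases hμ with rfl | rfl <;> rcases hν with rfl | rfl
    · -- μ = 1, ν = 1
      have hk := key (ξ - η) η
      rw [hsum, min3_swap] at hk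
      have hph : phase 1 1 (ξ - η) η = jap (ξ - η) + jap η - jap ξ := by
        simp only [phase, hsum]; ring
      exact le_abs.mpr (Or.inl (by linarith))
    · -- μ = 1, ν = -1
      have hk := key ξ (-η)
      rw [show ξ + -η = ξ - η by abel, norm_neg, jap_neg] at hk
      have hph : phase 1 (-1) (ξ - η) η = -(jap ξ + jap η - jap (ξ - η)) := by
        simp only [phase, hsum]; ring
      exact le_abs.mpr (Or.inr (by linarith))
    · -- μ = -1, ν = 1
      have hk := key ξ (η - ξ)
      rw [show ξ + (η - ξ) = η by abel, norm_sub_rev η ξ,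
        show η - ξ = -(ξ - η) by abel, jap_neg,
        min_comm ‖ξ - η‖ ‖η‖] at hk
      have hph : phase (-1) 1 (ξ - η) η = -(jap ξ + jap (ξ - η) - jap η) := by
        simp only [phase, hsum]; ring
      exact le_abs.mpr (Or.inr (by linarith))
    · -- μ = -1, ν = -1
      have hph : phase (-1) (-1) (ξ - η) η = -(jap ξ + jap (ξ - η) + jap η) := by
        simp only [phase, hsum]; ring
      have h1 := one_le_jap ξ; have h2 := one_le_jap (ξ - η); have h3 := one_le_jap η
      have hm := min3_nonneg ξ η (ξ - η)
      have hinv : (1 + min ‖ξ‖ (min ‖η‖ ‖ξ - η‖))⁻¹ ≤ 1 := by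
        rw [inv_le_one_iff₀]; right; linarith
      have hnn : (0:ℝ) ≤ (1 + min ‖ξ‖ (min ‖η‖ ‖ξ - η‖))⁻¹ := by positivity
      refine le_abs.mpr (Or.inr ?_)
      nlinarith
  refine ⟨H, ?_⟩
  intro ξ₁ ξ₂
  have h := H (ξ₁ + ξ₂) ξ₂
  rw [add_sub_cancel_right] at h
  have hm := min3_nonneg (ξ₁ + ξ₂) ξ₂ ξ₁
  have hpos : (0:ℝ) < (1/2 : ℝ) * (1 + min ‖ξ₁ + ξ₂‖ (min ‖ξ₂‖ ‖ξ₁‖))⁻¹ := by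
    have : (0:ℝ) < 1 + min ‖ξ₁ + ξ₂‖ (min ‖ξ₂‖ ‖ξ₁‖) := by linarith
    positivity
  exact abs_pos.mp (lt_of_lt_of_le hpos h)
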